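/- arXiv:2403.03039 — 3 statements merged into one kernel-verified Lean document; each statement's English description precedes it below -/
import Mathlib

section
/- Let a GCECSP instance with jobs 1,…,n be given and let (S_j, C_j, p_j)_{j=1}^n be a feasible schedule. Let t_1 ≤ t_2 ≤ … ≤ t_{2n} be the nondecreasing enumeration of the multiset {S_1, C_1, S_2, C_2, …, S_n, C_n} of event times. Then there exists a feasible schedule (S_j, C_j, p'_j)_{j=1}^n with the same start times S_j and completion times C_j (hence with the same order of events and the same value of any objective that is a function of the event times) such that for every job j and every e ∈ {1,…,2n−1}, the profile p'_j is constant on the interval [t_e, t_{e+1}). -/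
open MeasureTheory

/-- A GCECSP instance: resource capacity `P`, and for each of `n` jobs a resource
requirement `E`, release time `r`, deadline `dbar`, and consumption bounds
`0 < Pmin j ≤ Pmax j`. -/
structure GCECSPInstance (n : ℕ) where
  P : ℝ
  E : Fin n → ℝ
  r : Fin n → ℝ
  dbar : Fin n → ℝ
  Pmin : Fin n → ℝ
  Pmax : Fin n → ℝ
  P_pos : 0 < P
  E_pos : ∀ j, 0 < E j
  Pmin_pos : ∀ j, 0 < Pmin j
  Pmin_le_Pmax : ∀ j, Pmin j ≤ Pmax j

/-- A schedule: start time `S j`, completion time `C j` with `S j < C j`, and a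
Lebesgue-integrable resource consumption profile `p j : ℝ → ℝ` for each job. -/
structure Schedule (n : ℕ) where
  S : Fin n → ℝ
  C : Fin n → ℝ
  p : Fin n → ℝ → ℝ
  S_lt_C : ∀ j, S j < C j
  integrable : ∀ j, Integrable (p j)

/-- Feasibility of a schedule: (C1) total consumption equals `E j`; (C2) release times;
(C3) deadlines; (C4) no consumption outside `[S j, C j)`; (C5) consumption bounds while
active; (C6) total consumption never exceeds the capacity `P`. -/
def Feasible {n : ℕ} (I : GCECSPInstance n) (σ : Schedule n) : Prop :=
  (∀ j, (∫ t, σ.p j t) = I.E j) ∧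
  (∀ j, I.r j ≤ σ.S j) ∧
  (∀ j, σ.C j ≤ I.dbar j) ∧
  (∀ j, ∀ t, t < σ.S j → σ.p j t = 0) ∧
  (∀ j, ∀ t, σ.C j ≤ t → σ.p j t = 0) ∧
  (∀ j, ∀ t, σ.S j ≤ t → t < σ.C j → I.Pmin j ≤ σ.p j t ∧ σ.p j t ≤ I.Pmax j) ∧
  (∀ t, (∑ j, σ.p j t) ≤ I.P)

/-- The multiset of the `2n` event times (all start and completion times) of a schedule. -/
def eventTimes {n : ℕ} (σ : Schedule n) : Multiset ℝ :=
  (Finset.univ.val.map σ.S) + (Finset.univ.val.map σ.C)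

/-- `t : Fin (2n) → ℝ` is the nondecreasing enumeration of the multiset of event times. -/
def IsEventEnum {n : ℕ} (σ : Schedule n) (t : Fin (2 * n) → ℝ) : Prop :=
  Monotone t ∧ Multiset.map t Finset.univ.val = eventTimes σ

/-- Given a feasible schedule and the nondecreasing enumeration `t` of its
event times, there is a feasible schedule with the same start and completion times whose
profiles are constant on every interval `[t e, t (e+1))`. -/
theorem feasible_schedule_with_piecewise_constant_profiles
    {n : ℕ} (I : GCECSPInstance n) (σ : Schedule n) (hfeas : Feasible I σ)
    (t : Fin (2 * n) → ℝ) (ht : IsEventEnum σ t) :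
    ∃ σ' : Schedule n, σ'.S = σ.S ∧ σ'.C = σ.C ∧ Feasible I σ' ∧
      ∀ j : Fin n, ∀ e : ℕ, ∀ he : e + 1 < 2 * n,
        ∀ s₁ ∈ Set.Ico (t ⟨e, Nat.lt_of_succ_lt he⟩) (t ⟨e + 1, he⟩),
        ∀ s₂ ∈ Set.Ico (t ⟨e, Nat.lt_of_succ_lt he⟩) (t ⟨e + 1, he⟩),
          σ'.p j s₁ = σ'.p j s₂ := by
  classical
  obtain ⟨hmono, hmap⟩ := ht
  obtain ⟨hC1, hC2, hC3, hC4a, hC4b, hC5, hC6⟩ := hfeas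
  rcases Nat.eq_zero_or_pos n with hn | hn
  · subst hn
    exact ⟨σ, rfl, rfl, ⟨hC1, hC2, hC3, hC4a, hC4b, hC5, hC6⟩, fun j => j.elim0⟩
  -- extend `t` to a monotone function on ℕ
  set T : ℕ → ℝ := fun k => t ⟨min k (2 * n - 1), by omega⟩ with hT
  have hTmono : Monotone T := by
    intro a b hab
    exact hmono (by simp only [Fin.mk_le_mk]; omega)
  have hTeq : ∀ (k : ℕ) (hk : k < 2 * n), T k = t ⟨k, hk⟩ := by
    intro k hk
    simp only [hT]
    congr 1
    exact Fin.ext (by simp; omega)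
  have hmem : ∀ x : ℝ, x ∈ eventTimes σ → ∃ a : ℕ, a < 2 * n ∧ T a = x := by
    intro x hx
    rw [← hmap] at hx
    obtain ⟨a, -, ha⟩ := Multiset.mem_map.mp hx
    exact ⟨a.val, a.isLt, by rw [hTeq a.val a.isLt, Fin.eta]; exact ha⟩
  have hS_mem : ∀ j, ∃ a : ℕ, a < 2 * n ∧ T a = σ.S j := by
    intro j
    refine hmem _ ?_
    unfold eventTimes
    exact Multiset.mem_add.mpr (Or.inl (Multiset.mem_map_of_mem _ (Finset.mem_val.mpr (Finset.mem_univ j))))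
  have hC_mem : ∀ j, ∃ b : ℕ, b < 2 * n ∧ T b = σ.C j := by
    intro j
    refine hmem _ ?_
    unfold eventTimes
    exact Multiset.mem_add.mpr (Or.inr (Multiset.mem_map_of_mem _ (Finset.mem_val.mpr (Finset.mem_univ j))))
  -- the averaged profiles
  set avg : Fin n → ℕ → ℝ :=
    fun j e => (∫ x in Set.Ioo (T e) (T (e + 1)), σ.p j x) / (T (e + 1) - T e) with havg
  set q : Fin n → ℝ → ℝ :=
    fun j s => ∑ e ∈ Finset.range (2 * n),
      (Set.Ico (T e) (T (e + 1))).indicator (fun _ => avg j e) s with hq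
  -- the intervals are pairwise disjoint
  have hdisj : ∀ (s : ℝ) (e f : ℕ), s ∈ Set.Ico (T e) (T (e + 1)) →
      s ∈ Set.Ico (T f) (T (f + 1)) → e = f := by
    intro s e f he hf
    by_contra hne
    rcases Nat.lt_or_ge e f with h | h
    · exact absurd ((hTmono (show e + 1 ≤ f by omega)).trans hf.1) (not_le.mpr he.2)
    · have h' : f < e := by omega
      exact absurd ((hTmono (show f + 1 ≤ e by omega)).trans he.1) (not_le.mpr hf.2)
  have heval : ∀ (j : Fin n) (s : ℝ) (e : ℕ), e < 2 * n →
      s ∈ Set.Ico (T e) (T (e + 1)) → q j s = avg j e := by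
    intro j s e he hs
    simp only [hq]
    rw [Finset.sum_eq_single_of_mem e (Finset.mem_range.mpr he)
      (fun f _ hfe => Set.indicator_of_notMem (fun hsf => hfe (hdisj s f e hsf hs)) _),
      Set.indicator_of_mem hs]
  -- covering lemma
  have hcover : ∀ s : ℝ, T 0 ≤ s → s < T (2 * n - 1) →
      ∃ e, e + 1 < 2 * n ∧ s ∈ Set.Ico (T e) (T (e + 1)) := by
    intro s h0 hlast
    obtain ⟨e, he1, he2, he3⟩ :
        ∃ e, e ≤ 2 * n - 1 ∧ T e ≤ s ∧ ¬ T (e + 1) ≤ s := by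
      refine ⟨Nat.findGreatest (fun k => T k ≤ s) (2 * n - 1), Nat.findGreatest_le _,
        Nat.findGreatest_spec (P := fun k => T k ≤ s) (Nat.zero_le _) h0, ?_⟩
      intro hc
      by_cases hle : Nat.findGreatest (fun k => T k ≤ s) (2 * n - 1) + 1 ≤ 2 * n - 1
      · exact Nat.findGreatest_is_greatest (Nat.lt_succ_self _) hle hc
      · have heq : Nat.findGreatest (fun k => T k ≤ s) (2 * n - 1) = 2 * n - 1 := by
          have := Nat.findGreatest_le (P := fun k => T k ≤ s) (2 * n - 1)
          omega
        have hspec := Nat.findGreatest_spec (P := fun k => T k ≤ s) (n := 2 * n - 1) (Nat.zero_le _) h0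
        rw [heq] at hspec
        exact absurd hspec (not_le.mpr hlast)
    have hene : e ≠ 2 * n - 1 := fun h => absurd (h ▸ he2) (not_le.mpr hlast)
    exact ⟨e, by omega, he2, not_le.mp he3⟩
  -- the average vanishes on intervals outside the active window
  have havg_zero : ∀ (j : Fin n) (e : ℕ), (T (e + 1) ≤ σ.S j ∨ σ.C j ≤ T e) → avg j e = 0 := by
    intro j e hcase
    have h0 : ∀ x ∈ Set.Ioo (T e) (T (e + 1)), σ.p j x = 0 := by
      intro x hx
      rcases hcase with h | h
      · exact hC4a j x (lt_of_lt_of_le hx.2 h)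
      · exact hC4b j x (le_trans h (le_of_lt hx.1))
    have hI : (∫ x in Set.Ioo (T e) (T (e + 1)), σ.p j x) = 0 := by
      rw [setIntegral_congr_fun measurableSet_Ioo h0]
      simp
    simp only [havg]
    rw [hI, zero_div]
  -- the average obeys the consumption bounds on active intervals
  have havg_bounds : ∀ (j : Fin n) (e : ℕ), σ.S j ≤ T e → T e < T (e + 1) →
      T (e + 1) ≤ σ.C j → I.Pmin j ≤ avg j e ∧ avg j e ≤ I.Pmax j := by
    intro j e hS hlen hC
    have hsub : ∀ x ∈ Set.Ioo (T e) (T (e + 1)), σ.S j ≤ x ∧ x < σ.C j :=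
      fun x hx => ⟨le_trans hS (le_of_lt hx.1), lt_of_lt_of_le hx.2 hC⟩
    have hvol : (volume (Set.Ioo (T e) (T (e + 1)))).toReal = T (e + 1) - T e := by
      rw [Real.volume_Ioo, ENNReal.toReal_ofReal (by linarith)]
    have hvolfin : volume (Set.Ioo (T e) (T (e + 1))) < ⊤ := by
      rw [Real.volume_Ioo]; exact ENNReal.ofReal_lt_top
    constructor
    · simp only [havg]
      rw [le_div_iff₀ (by linarith)]
      calc I.Pmin j * (T (e + 1) - T e)
          = ∫ _ in Set.Ioo (T e) (T (e + 1)), I.Pmin j := by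
            rw [setIntegral_const, measureReal_def, hvol, smul_eq_mul, mul_comm]
        _ ≤ ∫ x in Set.Ioo (T e) (T (e + 1)), σ.p j x :=
            setIntegral_mono_on ((integrableOn_const_iff).mpr (Or.inr hvolfin))
              ((σ.integrable j).integrableOn) measurableSet_Ioo
              (fun x hx => (hC5 j x (hsub x hx).1 (hsub x hx).2).1)
    · simp only [havg]
      rw [div_le_iff₀ (by linarith)]
      calc (∫ x in Set.Ioo (T e) (T (e + 1)), σ.p j x)
          ≤ ∫ _ in Set.Ioo (T e) (T (e + 1)), I.Pmax j :=
            setIntegral_mono_on ((σ.integrable j).integrableOn)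
              ((integrableOn_const_iff).mpr (Or.inr hvolfin)) measurableSet_Ioo
              (fun x hx => (hC5 j x (hsub x hx).1 (hsub x hx).2).2)
        _ = I.Pmax j * (T (e + 1) - T e) := by
            rw [setIntegral_const, measureReal_def, hvol, smul_eq_mul, mul_comm]
  -- integrability of the new profiles
  have hq_int : ∀ j, Integrable (q j) := by
    intro j
    simp only [hq]
    refine integrable_finset_sum _ (fun e _ => ?_)
    refine (integrable_indicator_iff measurableSet_Ico).mpr ?_
    refine (integrableOn_const_iff).mpr (Or.inr ?_)
    rw [Real.volume_Ico]; exact ENNReal.ofReal_lt_top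
  -- (C1): the integral of the new profile is preserved
  have hq_C1 : ∀ j, (∫ s, q j s) = I.E j := by
    intro j
    obtain ⟨a, haN, haS⟩ := hS_mem j
    obtain ⟨b, hbN, hbC⟩ := hC_mem j
    have hT0S : T 0 ≤ σ.S j := by rw [← haS]; exact hTmono (Nat.zero_le a)
    have hClast : σ.C j ≤ T (2 * n) := by rw [← hbC]; exact hTmono (by omega)
    calc (∫ s, q j s)
        = ∑ e ∈ Finset.range (2 * n),
            ∫ s, (Set.Ico (T e) (T (e + 1))).indicator (fun _ => avg j e) s := by
          simp only [hq]
          rw [integral_finset_sum]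
          intro e _
          refine (integrable_indicator_iff measurableSet_Ico).mpr ?_
          refine (integrableOn_const_iff).mpr (Or.inr ?_)
          rw [Real.volume_Ico]; exact ENNReal.ofReal_lt_top
      _ = ∑ e ∈ Finset.range (2 * n), (T (e + 1) - T e) * avg j e := by
          refine Finset.sum_congr rfl (fun e _ => ?_)
          rw [integral_indicator_const _ measurableSet_Ico,
            Real.volume_real_Ico_of_le (hTmono (Nat.le_succ e)), smul_eq_mul]
      _ = ∑ e ∈ Finset.range (2 * n), ∫ x in Set.Ioo (T e) (T (e + 1)), σ.p j x := by
          refine Finset.sum_congr rfl (fun e _ => ?_)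
          rcases eq_or_lt_of_le (hTmono (Nat.le_succ e)) with h | h
          · rw [← h]
            simp
          · simp only [havg]
            rw [mul_comm, div_mul_cancel₀ _ (by linarith : T (e + 1) - T e ≠ 0)]
      _ = ∑ e ∈ Finset.range (2 * n), ∫ x in T e..T (e + 1), σ.p j x := by
          refine Finset.sum_congr rfl (fun e _ => ?_)
          rw [intervalIntegral.integral_of_le (hTmono (Nat.le_succ e)),
            integral_Ioc_eq_integral_Ioo]
      _ = ∫ x in (T 0)..(T (2 * n)), σ.p j x :=
          intervalIntegral.sum_integral_adjacent_intervals
            (fun k _ => (σ.integrable j).intervalIntegrable)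
      _ = ∫ x in Set.Ico (T 0) (T (2 * n)), σ.p j x := by
          rw [intervalIntegral.integral_of_le (hTmono (Nat.zero_le _)),
            integral_Ioc_eq_integral_Ioo, ← integral_Ico_eq_integral_Ioo]
      _ = ∫ x, σ.p j x := by
          refine setIntegral_eq_integral_of_forall_compl_eq_zero (fun x hx => ?_)
          rw [Set.mem_Ico, not_and_or, not_le, not_lt] at hx
          rcases hx with h | h
          · exact hC4a j x (lt_of_lt_of_le h hT0S)
          · exact hC4b j x (le_trans hClast h)
      _ = I.E j := hC1 j
  -- (C4) for the new profile
  have hq_C4a : ∀ j, ∀ s, s < σ.S j → q j s = 0 := by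
    intro j s hs
    obtain ⟨a, haN, haS⟩ := hS_mem j
    simp only [hq]
    refine Finset.sum_eq_zero (fun e _ => ?_)
    by_cases hmem' : s ∈ Set.Ico (T e) (T (e + 1))
    · rw [Set.indicator_of_mem hmem']
      refine havg_zero j e (Or.inl ?_)
      have h1 : ¬ a ≤ e := by
        intro h
        have h2 : σ.S j ≤ s := by rw [← haS]; exact le_trans (hTmono h) hmem'.1
        exact absurd hs (not_lt.mpr h2)
      rw [← haS]
      exact hTmono (by omega)
    · exact Set.indicator_of_notMem hmem' _
  have hq_C4b : ∀ j, ∀ s, σ.C j ≤ s → q j s = 0 := by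
    intro j s hs
    obtain ⟨b, hbN, hbC⟩ := hC_mem j
    simp only [hq]
    refine Finset.sum_eq_zero (fun e _ => ?_)
    by_cases hmem' : s ∈ Set.Ico (T e) (T (e + 1))
    · rw [Set.indicator_of_mem hmem']
      refine havg_zero j e (Or.inr ?_)
      have h1 : ¬ e + 1 ≤ b := by
        intro h
        have h2 : s < σ.C j := by rw [← hbC]; exact lt_of_lt_of_le hmem'.2 (hTmono h)
        exact absurd hs (not_le.mpr h2)
      rw [← hbC]
      exact hTmono (by omega)
    · exact Set.indicator_of_notMem hmem' _
  -- (C5) for the new profile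
  have hq_C5 : ∀ j, ∀ s, σ.S j ≤ s → s < σ.C j → I.Pmin j ≤ q j s ∧ q j s ≤ I.Pmax j := by
    intro j s h1 h2
    obtain ⟨a, haN, haS⟩ := hS_mem j
    obtain ⟨b, hbN, hbC⟩ := hC_mem j
    have hT0S : T 0 ≤ σ.S j := by rw [← haS]; exact hTmono (Nat.zero_le a)
    have hClast : σ.C j ≤ T (2 * n - 1) := by rw [← hbC]; exact hTmono (by omega)
    obtain ⟨e, heN, hse⟩ := hcover s (le_trans hT0S h1) (lt_of_lt_of_le h2 hClast)
    rw [heval j s e (by omega) hse]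
    have hSe : σ.S j ≤ T e := by
      by_cases h : a ≤ e
      · rw [← haS]; exact hTmono h
      · exfalso
        have h3 : T (e + 1) ≤ σ.S j := by rw [← haS]; exact hTmono (by omega)
        exact absurd h1 (not_le.mpr (lt_of_lt_of_le hse.2 h3))
    have hCe : T (e + 1) ≤ σ.C j := by
      by_cases h : e + 1 ≤ b
      · rw [← hbC]; exact hTmono h
      · exfalso
        have h3 : σ.C j ≤ T e := by rw [← hbC]; exact hTmono (by omega)
        exact absurd (lt_of_le_of_lt (h3.trans hse.1) h2) (lt_irrefl _)
    exact havg_bounds j e hSe (lt_of_le_of_lt hse.1 hse.2) hCe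
  -- (C6) for the new profile
  have hq_C6 : ∀ s, (∑ j, q j s) ≤ I.P := by
    intro s
    by_cases hex : ∃ e, e < 2 * n ∧ s ∈ Set.Ico (T e) (T (e + 1))
    · obtain ⟨e, heN, hse⟩ := hex
      have hlen : 0 < T (e + 1) - T e := by
        have := lt_of_le_of_lt hse.1 hse.2
        linarith
      calc (∑ j, q j s) = ∑ j, avg j e :=
            Finset.sum_congr rfl (fun j _ => heval j s e heN hse)
        _ = (∑ j, ∫ x in Set.Ioo (T e) (T (e + 1)), σ.p j x) / (T (e + 1) - T e) := by
            simp only [havg]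
            rw [← Finset.sum_div]
        _ = (∫ x in Set.Ioo (T e) (T (e + 1)), ∑ j, σ.p j x) / (T (e + 1) - T e) := by
            rw [integral_finset_sum _ (fun j _ => (σ.integrable j).integrableOn)]
        _ ≤ I.P := by
            rw [div_le_iff₀ hlen]
            calc (∫ x in Set.Ioo (T e) (T (e + 1)), ∑ j, σ.p j x)
                ≤ ∫ _ in Set.Ioo (T e) (T (e + 1)), I.P :=
                  setIntegral_mono_on
                    (integrable_finset_sum _ (fun j _ => (σ.integrable j).integrableOn))
                    ((integrableOn_const_iff).mpr (Or.inr (by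
                      rw [Real.volume_Ioo]; exact ENNReal.ofReal_lt_top)))
                    measurableSet_Ioo (fun x _ => hC6 x)
              _ = I.P * (T (e + 1) - T e) := by
                  rw [setIntegral_const,
                    Real.volume_real_Ioo_of_le (by linarith), smul_eq_mul, mul_comm]
    · push_neg at hex
      have hz : ∀ j : Fin n, q j s = 0 := by
        intro j
        simp only [hq]
        exact Finset.sum_eq_zero
          (fun e he => Set.indicator_of_notMem (hex e (Finset.mem_range.mp he)) _)
      rw [Finset.sum_congr rfl (fun j _ => hz j), Finset.sum_const_zero]
      exact le_of_lt I.P_pos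
  -- assemble
  refine ⟨⟨σ.S, σ.C, q, σ.S_lt_C, hq_int⟩, rfl, rfl,
    ⟨hq_C1, hC2, hC3, hq_C4a, hq_C4b, hq_C5, hq_C6⟩, ?_⟩
  intro j e he s₁ hs₁ s₂ hs₂
  have hTe : t ⟨e, Nat.lt_of_succ_lt he⟩ = T e := (hTeq e (by omega)).symm
  have hTe1 : t ⟨e + 1, he⟩ = T (e + 1) := (hTeq (e + 1) he).symm
  rw [hTe, hTe1] at hs₁ hs₂
  show q j s₁ = q j s₂
  rw [heval j s₁ e (by omega) hs₁, heval j s₂ e (by omega) hs₂]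
end

section
/- Let a GCECSP instance with jobs 1,…,n be given, let (S_j, C_j, p_j)_{j=1}^n be a feasible schedule, and let t_1 ≤ t_2 ≤ … ≤ t_{2n} be the nondecreasing enumeration of the multiset {S_1, C_1, …, S_n, C_n}. Define new profiles p'_j : ℝ → ℝ by p'_j(t) = (1/(t_{e+1} − t_e)) · ∫_{t_e}^{t_{e+1}} p_j(s) ds whenever t ∈ [t_e, t_{e+1}) for some e ∈ {1,…,2n−1} with t_e < t_{e+1}, and p'_j(t) = 0 for t < t_1 and for t ≥ t_{2n}. Then (S_j, C_j, p'_j)_{j=1}^n is again a feasible schedule: each p'_j integrates to E_j, vanishes outside [S_j, C_j), lies in [P⁻_j, P⁺_j] on [S_j, C_j), and Σ_{j=1}^n p'_j(t) ≤ P for all t. -/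
open MeasureTheory

private theorem averaged_profiles_feasible'
    {n : ℕ} (hn : 0 < n)
    (P : ℝ) (E Pmin Pmax : Fin n → ℝ) (S C : Fin n → ℝ) (p : Fin n → ℝ → ℝ)
    (hP : 0 < P) (hSC : ∀ j, S j < C j) (hpint : ∀ j, Integrable (p j))
    (h1 : ∀ j, (∫ x, p j x) = E j)
    (h4 : ∀ j, ∀ x, x < S j → p j x = 0)
    (h5 : ∀ j, ∀ x, C j ≤ x → p j x = 0)
    (h6 : ∀ j, ∀ x, S j ≤ x → x < C j → Pmin j ≤ p j x ∧ p j x ≤ Pmax j)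
    (h7 : ∀ x, (∑ j, p j x) ≤ P)
    (t : Fin (2 * n) → ℝ) (htm : Monotone t)
    (hSmem : ∀ j, ∃ a : Fin (2 * n), t a = S j)
    (hCmem : ∀ j, ∃ b : Fin (2 * n), t b = C j)
    (p' : Fin n → ℝ → ℝ)
    (hval : ∀ j : Fin n, ∀ e : ℕ, ∀ he : e + 1 < 2 * n,
      t ⟨e, Nat.lt_of_succ_lt he⟩ < t ⟨e + 1, he⟩ →
      ∀ s ∈ Set.Ico (t ⟨e, Nat.lt_of_succ_lt he⟩) (t ⟨e + 1, he⟩),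
        p' j s = (∫ u in (t ⟨e, Nat.lt_of_succ_lt he⟩)..(t ⟨e + 1, he⟩), p j u) /
          (t ⟨e + 1, he⟩ - t ⟨e, Nat.lt_of_succ_lt he⟩))
    (hbefore : ∀ j : Fin n, ∀ s : ℝ, s < t ⟨0, Nat.mul_pos two_pos hn⟩ → p' j s = 0)
    (hafter : ∀ j : Fin n, ∀ s : ℝ, t ⟨2 * n - 1, Nat.sub_lt (Nat.mul_pos two_pos hn) one_pos⟩ ≤ s → p' j s = 0) :
    (∀ j, Integrable (p' j)) ∧
    (∀ j, (∫ s, p' j s) = E j) ∧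
    (∀ j, ∀ s, s < S j → p' j s = 0) ∧
    (∀ j, ∀ s, C j ≤ s → p' j s = 0) ∧
    (∀ j, ∀ s, S j ≤ s → s < C j → Pmin j ≤ p' j s ∧ p' j s ≤ Pmax j) ∧
    (∀ s, (∑ j, p' j s) ≤ P) := by
  classical
  have h2n : 0 < 2 * n := by omega
  set u : ℕ → ℝ := fun e => t ⟨min e (2 * n - 1), by omega⟩ with hu
  have hu_eq : ∀ (e : ℕ) (he : e < 2 * n), u e = t ⟨e, he⟩ := by
    intro e he
    simp only [hu]
    congr 1
    simp [Fin.mk.injEq]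
    omega
  have hu_mono : Monotone u := by
    intro a b hab
    exact htm (by simp only [Fin.mk_le_mk]; omega)
  have hu_le : ∀ a : Fin (2 * n), u 0 ≤ t a ∧ t a ≤ u (2 * n - 1) := by
    intro a
    rw [hu_eq 0 h2n, hu_eq (2 * n - 1) (by omega)]
    constructor
    · exact htm (by simp [Fin.le_def])
    · exact htm (by simp only [Fin.le_def]; have := a.isLt; omega)
  have hS0 : ∀ j, u 0 ≤ S j := by
    intro j; obtain ⟨a, ha⟩ := hSmem j; rw [← ha]; exact (hu_le a).1
  have hCN : ∀ j, C j ≤ u (2 * n - 1) := by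
    intro j; obtain ⟨b, hb⟩ := hCmem j; rw [← hb]; exact (hu_le b).2
  -- locate s in an interval
  have hfind : ∀ s : ℝ, u 0 ≤ s → s < u (2 * n - 1) →
      ∃ e, e < 2 * n - 1 ∧ u e ≤ s ∧ s < u (e + 1) := by
    intro s h0 hNs
    set e := Nat.findGreatest (fun k => u k ≤ s) (2 * n - 1) with he
    have hPe : u e ≤ s := by
      have h := Nat.findGreatest_spec (P := fun k => u k ≤ s) (Nat.zero_le (2 * n - 1)) h0
      rwa [← he] at h
    have heN : e ≤ 2 * n - 1 := Nat.findGreatest_le _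
    have heltN : e < 2 * n - 1 := by
      rcases lt_or_eq_of_le heN with h | h
      · exact h
      · exact absurd (h ▸ hPe) (not_le.2 hNs)
    have hng : ¬ u (e + 1) ≤ s := by
      have h := Nat.findGreatest_is_greatest (P := fun k => u k ≤ s) (n := 2 * n - 1)
        (k := e + 1) (by omega) (by omega)
      exact h
    exact ⟨e, heltN, hPe, not_le.1 hng⟩
  -- comparison lemmas
  have hcompA : ∀ e, e < 2 * n - 1 → ∀ s, u e ≤ s → s < u (e + 1) →
      ∀ a : Fin (2 * n), s < t a → u (e + 1) ≤ t a := by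
    intro e he s hs1 hs2 a ha
    have hne : ¬ (a.1 ≤ e) := by
      intro h
      have : t a ≤ u e := by
        rw [hu_eq e (by omega)]
        exact htm (by simp only [Fin.le_def]; omega)
      linarith
    rw [hu_eq (e + 1) (by omega)]
    exact htm (by simp only [Fin.le_def]; omega)
  have hcompB : ∀ e, e < 2 * n - 1 → ∀ s, u e ≤ s → s < u (e + 1) →
      ∀ a : Fin (2 * n), t a ≤ s → t a ≤ u e := by
    intro e he s hs1 hs2 a ha
    have hne : ¬ (e + 1 ≤ a.1) := by
      intro h
      have : u (e + 1) ≤ t a := by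
        rw [hu_eq (e + 1) (by omega)]
        exact htm (by simp only [Fin.le_def]; omega)
      linarith
    rw [hu_eq e (by omega)]
    exact htm (by simp only [Fin.le_def]; omega)
  -- interval averages
  set c : Fin n → ℕ → ℝ := fun j e =>
    if u e < u (e + 1) then (∫ x in u e..u (e + 1), p j x) / (u (e + 1) - u e) else 0
    with hc
  have hval' : ∀ j, ∀ e, e < 2 * n - 1 → ∀ s, u e ≤ s → s < u (e + 1) → p' j s = c j e := by
    intro j e he s hs1 hs2
    have he1 : e + 1 < 2 * n := by omega
    have hlt : u e < u (e + 1) := lt_of_le_of_lt hs1 hs2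
    rw [hc]
    simp only [if_pos hlt]
    have ha : u e = t ⟨e, Nat.lt_of_succ_lt he1⟩ := hu_eq e (by omega)
    have hb : u (e + 1) = t ⟨e + 1, he1⟩ := hu_eq (e + 1) he1
    rw [ha] at hs1 hlt
    rw [hb] at hs2 hlt
    rw [ha, hb]
    exact hval j e he1 hlt s (Set.mem_Ico.2 ⟨hs1, hs2⟩)
  have hbefore' : ∀ j s, s < u 0 → p' j s = 0 := by
    intro j s h
    exact hbefore j s (by rwa [hu_eq 0 h2n] at h)
  have hafter' : ∀ j s, u (2 * n - 1) ≤ s → p' j s = 0 := by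
    intro j s h
    exact hafter j s (by rwa [hu_eq (2 * n - 1) (by omega)] at h)
  -- step-function representation
  have hrep : ∀ j s, p' j s =
      ∑ e ∈ Finset.range (2 * n - 1),
        (Set.Ico (u e) (u (e + 1))).indicator (fun _ => c j e) s := by
    intro j s
    rcases lt_or_ge s (u 0) with h0 | h0
    · rw [hbefore' j s h0]
      symm
      apply Finset.sum_eq_zero
      intro e _
      apply Set.indicator_of_notMem
      intro hmem
      exact absurd hmem.1 (not_le.2 (lt_of_lt_of_le h0 (hu_mono (Nat.zero_le e))))
    rcases le_or_gt (u (2 * n - 1)) s with hNs | hNs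
    · rw [hafter' j s hNs]
      symm
      apply Finset.sum_eq_zero
      intro e he
      apply Set.indicator_of_notMem
      intro hmem
      have hle : u (e + 1) ≤ u (2 * n - 1) := hu_mono (by
        have := Finset.mem_range.1 he; omega)
      exact absurd hmem.2 (not_lt.2 (le_trans hle hNs))
    obtain ⟨e, heN, hs1, hs2⟩ := hfind s h0 hNs
    rw [hval' j e heN s hs1 hs2]
    rw [Finset.sum_eq_single e]
    · rw [Set.indicator_of_mem (Set.mem_Ico.2 ⟨hs1, hs2⟩)]
    · intro f hf hfe
      apply Set.indicator_of_notMem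
      intro hmem
      rcases lt_or_gt_of_ne hfe with h | h
      · exact absurd hs1 (not_le.2 (lt_of_lt_of_le hmem.2 (hu_mono (by omega))))
      · exact absurd hmem.1 (not_le.2 (lt_of_lt_of_le hs2 (hu_mono (by omega))))
    · intro h
      exact absurd (Finset.mem_range.2 heN) h
  -- integrability
  have hind_int : ∀ (a b x : ℝ), Integrable ((Set.Ico a b).indicator (fun _ => x)) := by
    intro a b x
    rw [integrable_indicator_iff measurableSet_Ico]
    exact integrableOn_const (by rw [Real.volume_Ico]; exact ENNReal.ofReal_ne_top)
  have hint' : ∀ j, Integrable (p' j) := by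
    intro j
    have hfun : p' j = fun s => ∑ e ∈ Finset.range (2 * n - 1),
        (Set.Ico (u e) (u (e + 1))).indicator (fun _ => c j e) s := funext (hrep j)
    rw [hfun]
    exact integrable_finset_sum _ (fun e _ => hind_int _ _ _)
  -- the integral
  have hintegral : ∀ j, (∫ s, p' j s) = E j := by
    intro j
    simp only [hrep]
    rw [integral_finset_sum _ (fun e _ => hind_int _ _ _)]
    have hterm : ∀ e ∈ Finset.range (2 * n - 1),
        (∫ s, (Set.Ico (u e) (u (e + 1))).indicator (fun _ => c j e) s) =
          ∫ x in u e..u (e + 1), p j x := by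
      intro e _
      rw [integral_indicator_const _ measurableSet_Ico, measureReal_def, Real.volume_Ico, smul_eq_mul]
      rcases eq_or_lt_of_le (hu_mono (Nat.le_succ e)) with heq | hlt
      · rw [← heq]
        simp [hc]
      · rw [ENNReal.toReal_ofReal (by linarith)]
        rw [hc]
        simp only [if_pos hlt]
        rw [mul_div_cancel₀ _ (by linarith : u (e + 1) - u e ≠ 0)]
    rw [Finset.sum_congr rfl hterm]
    rw [intervalIntegral.sum_integral_adjacent_intervals
      (fun k _ => (hpint j).intervalIntegrable)]
    rw [intervalIntegral.integral_of_le (hu_mono (Nat.zero_le _)),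
      integral_Ioc_eq_integral_Ioo, ← integral_Ico_eq_integral_Ioo]
    rw [setIntegral_eq_integral_of_forall_compl_eq_zero]
    · exact h1 j
    · intro x hx
      rw [Set.mem_Ico] at hx
      push_neg at hx
      rcases lt_or_ge x (u 0) with hx0 | hx0
      · exact h4 j x (lt_of_lt_of_le hx0 (hS0 j))
      · exact h5 j x (le_trans (hCN j) (hx hx0))
  -- zero before start
  have hbz : ∀ j s, s < S j → p' j s = 0 := by
    intro j s hs
    rcases lt_or_ge s (u 0) with h0 | h0
    · exact hbefore' j s h0
    have hNs : s < u (2 * n - 1) :=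
      lt_of_lt_of_le hs (le_trans (le_of_lt (hSC j)) (hCN j))
    obtain ⟨e, heN, hs1, hs2⟩ := hfind s h0 hNs
    have hlt : u e < u (e + 1) := lt_of_le_of_lt hs1 hs2
    rw [hval' j e heN s hs1 hs2, hc]
    simp only [if_pos hlt]
    obtain ⟨a, ha⟩ := hSmem j
    have hA : u (e + 1) ≤ S j := by
      rw [← ha]; exact hcompA e heN s hs1 hs2 a (ha ▸ hs)
    have hz : (∫ x in u e..u (e + 1), p j x) = 0 := by
      rw [intervalIntegral.integral_of_le hlt.le, integral_Ioc_eq_integral_Ioo]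
      apply setIntegral_eq_zero_of_forall_eq_zero
      intro x hx
      exact h4 j x (lt_of_lt_of_le hx.2 hA)
    rw [hz, zero_div]
  -- zero after completion
  have haz : ∀ j s, C j ≤ s → p' j s = 0 := by
    intro j s hs
    rcases le_or_gt (u (2 * n - 1)) s with hNs | hNs
    · exact hafter' j s hNs
    have h0 : u 0 ≤ s := le_trans (le_trans (hS0 j) (le_of_lt (hSC j))) hs
    obtain ⟨e, heN, hs1, hs2⟩ := hfind s h0 hNs
    have hlt : u e < u (e + 1) := lt_of_le_of_lt hs1 hs2
    rw [hval' j e heN s hs1 hs2, hc]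
    simp only [if_pos hlt]
    obtain ⟨b, hb⟩ := hCmem j
    have hB : C j ≤ u e := by
      rw [← hb]; exact hcompB e heN s hs1 hs2 b (hb ▸ hs)
    have hz : (∫ x in u e..u (e + 1), p j x) = 0 := by
      rw [intervalIntegral.integral_of_le hlt.le, integral_Ioc_eq_integral_Ioo]
      apply setIntegral_eq_zero_of_forall_eq_zero
      intro x hx
      exact h5 j x (le_trans hB (le_of_lt hx.1))
    rw [hz, zero_div]
  -- bounds while active
  have hbounds : ∀ j s, S j ≤ s → s < C j → Pmin j ≤ p' j s ∧ p' j s ≤ Pmax j := by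
    intro j s hs1 hs2
    have h0 : u 0 ≤ s := le_trans (hS0 j) hs1
    have hNs : s < u (2 * n - 1) := lt_of_lt_of_le hs2 (hCN j)
    obtain ⟨e, heN, he1, he2⟩ := hfind s h0 hNs
    have hlt : u e < u (e + 1) := lt_of_le_of_lt he1 he2
    have hΔ : (0 : ℝ) < u (e + 1) - u e := by linarith
    rw [hval' j e heN s he1 he2, hc]
    simp only [if_pos hlt]
    obtain ⟨a, ha⟩ := hSmem j
    obtain ⟨b, hb⟩ := hCmem j
    have hSe : S j ≤ u e := by
      rw [← ha]; exact hcompB e heN s he1 he2 a (ha ▸ hs1)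
    have hCe : u (e + 1) ≤ C j := by
      rw [← hb]; exact hcompA e heN s he1 he2 b (hb ▸ hs2)
    have hIcoav : (∫ x in u e..u (e + 1), p j x) =
        ∫ x in Set.Ico (u e) (u (e + 1)), p j x := by
      rw [intervalIntegral.integral_of_le hlt.le, integral_Ioc_eq_integral_Ioo,
        ← integral_Ico_eq_integral_Ioo]
    have hIcovol : (volume (Set.Ico (u e) (u (e + 1)))).toReal = u (e + 1) - u e := by
      rw [Real.volume_Ico, ENNReal.toReal_ofReal (by linarith)]
    have hlow : Pmin j * (u (e + 1) - u e) ≤ ∫ x in Set.Ico (u e) (u (e + 1)), p j x := by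
      have hmono := setIntegral_mono_on
        (integrableOn_const (by rw [Real.volume_Ico]; exact ENNReal.ofReal_ne_top))
        ((hpint j).integrableOn) measurableSet_Ico
        (fun x hx => (h6 j x (le_trans hSe hx.1) (lt_of_lt_of_le hx.2 hCe)).1)
      rwa [setIntegral_const, measureReal_def, hIcovol, smul_eq_mul, mul_comm] at hmono
    have hup : (∫ x in Set.Ico (u e) (u (e + 1)), p j x) ≤ Pmax j * (u (e + 1) - u e) := by
      have hmono := setIntegral_mono_on
        ((hpint j).integrableOn)
        (integrableOn_const (by rw [Real.volume_Ico]; exact ENNReal.ofReal_ne_top))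
        measurableSet_Ico
        (fun x hx => (h6 j x (le_trans hSe hx.1) (lt_of_lt_of_le hx.2 hCe)).2)
      rwa [setIntegral_const, measureReal_def, hIcovol, smul_eq_mul, mul_comm] at hmono
    constructor
    · rw [le_div_iff₀ hΔ, hIcoav]; exact hlow
    · rw [div_le_iff₀ hΔ, hIcoav]; exact hup
  -- capacity
  have hcap : ∀ s, (∑ j, p' j s) ≤ P := by
    intro s
    rcases lt_or_ge s (u 0) with h0 | h0
    · rw [Finset.sum_eq_zero (fun j _ => hbefore' j s h0)]
      exact hP.le
    rcases le_or_gt (u (2 * n - 1)) s with hNs | hNs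
    · rw [Finset.sum_eq_zero (fun j _ => hafter' j s hNs)]
      exact hP.le
    obtain ⟨e, heN, he1, he2⟩ := hfind s h0 hNs
    have hlt : u e < u (e + 1) := lt_of_le_of_lt he1 he2
    have hΔ : (0 : ℝ) < u (e + 1) - u e := by linarith
    have hsum : (∑ j, p' j s) =
        (∫ x in u e..u (e + 1), ∑ j, p j x) / (u (e + 1) - u e) := by
      rw [intervalIntegral.integral_finset_sum (fun j _ => (hpint j).intervalIntegrable),
        Finset.sum_div]
      apply Finset.sum_congr rfl
      intro j _
      rw [hval' j e heN s he1 he2, hc]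
      simp only [if_pos hlt]
    rw [hsum]
    have hintle : (∫ x in u e..u (e + 1), ∑ j, p j x) ≤ P * (u (e + 1) - u e) := by
      have hmono := intervalIntegral.integral_mono_on hlt.le
        ((integrable_finset_sum Finset.univ (fun j _ => hpint j)).intervalIntegrable)
        intervalIntegrable_const
        (fun x _ => h7 x)
      rwa [intervalIntegral.integral_const, smul_eq_mul, mul_comm] at hmono
    rw [div_le_iff₀ hΔ]
    linarith
  exact ⟨hint', hintegral, hbz, haz, hbounds, hcap⟩

/-- Averaging the profiles of a feasible schedule over each interval of
consecutive event times (and setting them to `0` before the first and from the last event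
time on) again yields a feasible schedule. -/
theorem averaged_profiles_feasible
    {n : ℕ} (hn : 0 < n) (I : GCECSPInstance n) (σ : Schedule n) (hfeas : Feasible I σ)
    (t : Fin (2 * n) → ℝ) (ht : IsEventEnum σ t)
    (p' : Fin n → ℝ → ℝ)
    (hval : ∀ j : Fin n, ∀ e : ℕ, ∀ he : e + 1 < 2 * n,
      t ⟨e, Nat.lt_of_succ_lt he⟩ < t ⟨e + 1, he⟩ →
      ∀ s ∈ Set.Ico (t ⟨e, Nat.lt_of_succ_lt he⟩) (t ⟨e + 1, he⟩),
        p' j s = (∫ u in (t ⟨e, Nat.lt_of_succ_lt he⟩)..(t ⟨e + 1, he⟩), σ.p j u) /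
          (t ⟨e + 1, he⟩ - t ⟨e, Nat.lt_of_succ_lt he⟩))
    (hbefore : ∀ j : Fin n, ∀ s : ℝ, s < t ⟨0, by omega⟩ → p' j s = 0)
    (hafter : ∀ j : Fin n, ∀ s : ℝ, t ⟨2 * n - 1, by omega⟩ ≤ s → p' j s = 0) :
    (∀ j, Integrable (p' j)) ∧
    (∀ j, (∫ s, p' j s) = I.E j) ∧
    (∀ j, ∀ s, s < σ.S j → p' j s = 0) ∧
    (∀ j, ∀ s, σ.C j ≤ s → p' j s = 0) ∧
    (∀ j, ∀ s, σ.S j ≤ s → s < σ.C j → I.Pmin j ≤ p' j s ∧ p' j s ≤ I.Pmax j) ∧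
    (∀ s, (∑ j, p' j s) ≤ I.P) := by
  obtain ⟨h1, h2, h3, h4, h5, h6, h7⟩ := hfeas
  obtain ⟨htm, hten⟩ := ht
  have hmemt : ∀ x : ℝ, x ∈ eventTimes σ → ∃ a : Fin (2 * n), t a = x := by
    intro x hx
    rw [← hten] at hx
    obtain ⟨a, _, ha⟩ := Multiset.mem_map.1 hx
    exact ⟨a, ha⟩
  have hSmem : ∀ j, ∃ a : Fin (2 * n), t a = σ.S j := by
    intro j
    apply hmemt
    unfold eventTimes
    rw [Multiset.mem_add]
    exact Or.inl (Multiset.mem_map_of_mem _ (Finset.mem_val.mpr (Finset.mem_univ j)))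
  have hCmem : ∀ j, ∃ b : Fin (2 * n), t b = σ.C j := by
    intro j
    apply hmemt
    unfold eventTimes
    rw [Multiset.mem_add]
    exact Or.inr (Multiset.mem_map_of_mem _ (Finset.mem_val.mpr (Finset.mem_univ j)))
  exact averaged_profiles_feasible' hn I.P I.E I.Pmin I.Pmax σ.S σ.C σ.p I.P_pos
    σ.S_lt_C σ.integrable h1 h4 h5 h6 h7 t htm hSmem hCmem p' hval hbefore hafter
end

section
/- Let a GCECSP instance with jobs 1,…,n be given and let g : ℝ^n × ℝ^n → ℝ be any objective function of the start and completion times (S_1,…,S_n, C_1,…,C_n). Call a feasible schedule piecewise constant if each profile p_j is constant on every interval [t_e, t_{e+1}) determined by consecutive elements t_1 ≤ … ≤ t_{2n} of the sorted multiset of all start and completion times. Then the infimum of g over all feasible schedules equals the infimum of g over all piecewise-constant feasible schedules; in particular, restricting the event-based model to profiles that are constant between consecutive events loses no optimality for any objective that is a function of the event times. -/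
open MeasureTheory

/-- A schedule is piecewise constant if each profile is constant on every interval
`[t e, t (e+1))` determined by consecutive elements of the sorted multiset of all start
and completion times. -/
def PiecewiseConstantProfiles {n : ℕ} (σ : Schedule n) : Prop :=
  ∀ t : Fin (2 * n) → ℝ, IsEventEnum σ t →
    ∀ j : Fin n, ∀ e : ℕ, ∀ he : e + 1 < 2 * n,
      ∀ s₁ ∈ Set.Ico (t ⟨e, Nat.lt_of_succ_lt he⟩) (t ⟨e + 1, he⟩),
      ∀ s₂ ∈ Set.Ico (t ⟨e, Nat.lt_of_succ_lt he⟩) (t ⟨e + 1, he⟩),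
        σ.p j s₁ = σ.p j s₂

/-! ### Auxiliary material -/

section Aux

lemma multiset_map_univ_eq_ofFn {m : ℕ} (f : Fin m → ℝ) :
    Multiset.map f Finset.univ.val = ↑(List.ofFn f) := by
  rw [List.ofFn_eq_map]
  rfl

/-- A monotone enumeration of a multiset is unique. -/
lemma monotone_enum_unique {m : ℕ} {t t' : Fin m → ℝ} (h : Monotone t) (h' : Monotone t')
    (he : Multiset.map t Finset.univ.val = Multiset.map t' Finset.univ.val) : t = t' := by
  have hperm : List.Perm (List.ofFn t) (List.ofFn t') := by
    rw [← Multiset.coe_eq_coe, ← multiset_map_univ_eq_ofFn, ← multiset_map_univ_eq_ofFn]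
    exact he
  have heq : List.ofFn t = List.ofFn t' :=
    List.Perm.eq_of_sortedLE h.sortedLE_ofFn h'.sortedLE_ofFn hperm
  funext i
  have hi : (i : ℕ) < (List.ofFn t).length := by simp
  have h1 : (List.ofFn t)[(i : ℕ)]'hi = t i := by simp
  have h2 : (List.ofFn t')[(i : ℕ)]'(by simp) = t' i := by simp
  rw [← h1, ← h2]
  exact List.getElem_of_eq heq hi

lemma ofFn_get_cast {l : List ℝ} {m : ℕ} (h : l.length = m) :
    List.ofFn (fun e : Fin m => l.get (Fin.cast h.symm e)) = l := by
  subst h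
  exact List.ofFn_get l

lemma exists_eventEnum {n : ℕ} (σ : Schedule n) : ∃ T, IsEventEnum σ T := by
  classical
  have hcard : Multiset.card (eventTimes σ) = 2 * n := by
    simp [eventTimes, two_mul]
  set L := Multiset.sort (eventTimes σ) (· ≤ ·) with hLdef
  have hlen : L.length = 2 * n := by
    rw [hLdef, Multiset.length_sort, hcard]
  refine ⟨fun e => L.get (Fin.cast hlen.symm e), ?_, ?_⟩
  · intro a b hab
    exact (Multiset.pairwise_sort (s := eventTimes σ) (r := (· ≤ ·))).rel_get_of_le hab
  · rw [multiset_map_univ_eq_ofFn, ofFn_get_cast hlen]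
    exact Multiset.sort_eq _ _

lemma mem_enum_S {n : ℕ} {σ : Schedule n} {T : Fin (2 * n) → ℝ} (hT : IsEventEnum σ T)
    (j : Fin n) : ∃ m, T m = σ.S j := by
  have hS : σ.S j ∈ eventTimes σ :=
    Multiset.mem_add.2 (Or.inl (Multiset.mem_map_of_mem _ (Finset.mem_univ j)))
  rw [← hT.2] at hS
  obtain ⟨m, _, hm⟩ := Multiset.mem_map.1 hS
  exact ⟨m, hm⟩

lemma mem_enum_C {n : ℕ} {σ : Schedule n} {T : Fin (2 * n) → ℝ} (hT : IsEventEnum σ T)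
    (j : Fin n) : ∃ m, T m = σ.C j := by
  have hS : σ.C j ∈ eventTimes σ :=
    Multiset.mem_add.2 (Or.inr (Multiset.mem_map_of_mem _ (Finset.mem_univ j)))
  rw [← hT.2] at hS
  obtain ⟨m, _, hm⟩ := Multiset.mem_map.1 hS
  exact ⟨m, hm⟩

/-- Locate the inter-event interval containing `s`. -/
lemma locate {n : ℕ} {T : Fin (2 * n) → ℝ} (hmono : Monotone T) {a b : Fin (2 * n)} {s : ℝ}
    (ha : T a ≤ s) (hb : s < T b) :
    ∃ e : ℕ, ∃ he : e + 1 < 2 * n,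
      T ⟨e, Nat.lt_of_succ_lt he⟩ ≤ s ∧ s < T ⟨e + 1, he⟩ := by
  classical
  set F := Finset.univ.filter (fun i : Fin (2 * n) => T i ≤ s) with hF
  have haF : a ∈ F := by simp [hF, ha]
  have hFne : F.Nonempty := ⟨a, haF⟩
  set e := F.max' hFne with hedef
  have heF : e ∈ F := F.max'_mem hFne
  have hTe : T e ≤ s := by simpa [hF] using heF
  have heb : e < b := by
    by_contra hc
    push_neg at hc
    exact absurd (le_trans (hmono hc) hTe) (not_le.2 hb)
  have he1 : (e : ℕ) + 1 < 2 * n := lt_of_le_of_lt (Nat.succ_le_of_lt heb) b.2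
  refine ⟨e, he1, ?_, ?_⟩
  · exact hTe
  · by_contra hc
    push_neg at hc
    have hmem : (⟨(e : ℕ) + 1, he1⟩ : Fin (2 * n)) ∈ F := by simp [hF, hc]
    have := F.le_max' _ hmem
    rw [← hedef] at this
    exact absurd this (by simp [Fin.le_def])

noncomputable def avgOn (a b : ℝ) (f : ℝ → ℝ) : ℝ := (∫ x in Set.Ico a b, f x) / (b - a)

lemma avgOn_le {a b c : ℝ} {f : ℝ → ℝ} (hab : a < b) (hint : IntegrableOn f (Set.Ico a b))
    (hf : ∀ x ∈ Set.Ico a b, f x ≤ c) : avgOn a b f ≤ c := by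
  rw [avgOn, div_le_iff₀ (by linarith)]
  calc ∫ x in Set.Ico a b, f x
      ≤ ∫ _x in Set.Ico a b, c :=
        setIntegral_mono_on hint
          (integrableOn_const measure_Ico_lt_top.ne) measurableSet_Ico hf
    _ = c * (b - a) := by
        rw [setIntegral_const, Real.volume_real_Ico_of_le (by linarith), smul_eq_mul,
          mul_comm]

lemma le_avgOn {a b c : ℝ} {f : ℝ → ℝ} (hab : a < b) (hint : IntegrableOn f (Set.Ico a b))
    (hf : ∀ x ∈ Set.Ico a b, c ≤ f x) : c ≤ avgOn a b f := by
  rw [avgOn, le_div_iff₀ (by linarith)]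
  calc c * (b - a) = ∫ _x in Set.Ico a b, c := by
        rw [setIntegral_const, Real.volume_real_Ico_of_le (by linarith), smul_eq_mul,
          mul_comm]
    _ ≤ ∫ x in Set.Ico a b, f x :=
        setIntegral_mono_on (integrableOn_const measure_Ico_lt_top.ne) hint
          measurableSet_Ico hf

lemma avgOn_eq_zero {a b : ℝ} {f : ℝ → ℝ} (hf : ∀ x ∈ Set.Ico a b, f x = 0) :
    avgOn a b f = 0 := by
  rw [avgOn, setIntegral_eq_zero_of_forall_eq_zero hf, zero_div]

/-- The averaged (piecewise constant) profile. -/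
noncomputable def newp {n : ℕ} (σ : Schedule n) (T : Fin (2 * n) → ℝ) (j : Fin n) (s : ℝ) : ℝ :=
  ∑ e : Fin (2 * n), if h : (e : ℕ) + 1 < 2 * n then
    (Set.Ico (T e) (T ⟨(e : ℕ) + 1, h⟩)).indicator
      (fun _ => avgOn (T e) (T ⟨(e : ℕ) + 1, h⟩) (σ.p j)) s
  else 0

lemma newp_eq {n : ℕ} (σ : Schedule n) {T : Fin (2 * n) → ℝ} (hmono : Monotone T) (j : Fin n)
    {e : ℕ} (he : e + 1 < 2 * n) {s : ℝ}
    (h1 : T ⟨e, Nat.lt_of_succ_lt he⟩ ≤ s) (h2 : s < T ⟨e + 1, he⟩) :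
    newp σ T j s = avgOn (T ⟨e, Nat.lt_of_succ_lt he⟩) (T ⟨e + 1, he⟩) (σ.p j) := by
  rw [newp, Finset.sum_eq_single (⟨e, Nat.lt_of_succ_lt he⟩ : Fin (2 * n))]
  · rw [dif_pos he]
    exact Set.indicator_of_mem (Set.mem_Ico.2 ⟨h1, h2⟩) _
  · intro e' _ hne
    rcases Nat.lt_or_ge ((e' : ℕ) + 1) (2 * n) with h' | h'
    · rw [dif_pos h']
      apply Set.indicator_of_notMem
      intro hs
      rcases lt_trichotomy (e' : ℕ) e with hlt | heq | hgt
      · have hle : (⟨(e' : ℕ) + 1, h'⟩ : Fin (2 * n)) ≤ ⟨e, Nat.lt_of_succ_lt he⟩ :=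
          Fin.mk_le_mk.2 hlt
        exact absurd (le_trans (hmono hle) h1) (not_le.2 hs.2)
      · exact hne (Fin.ext heq)
      · have hle : (⟨e + 1, he⟩ : Fin (2 * n)) ≤ e' := by
          rw [Fin.le_def]; exact hgt
        exact absurd (le_trans (hmono hle) hs.1) (not_le.2 h2)
    · rw [dif_neg (not_lt.2 h')]
  · intro h
    exact absurd (Finset.mem_univ _) h

lemma newp_eq_zero {n : ℕ} (σ : Schedule n) (T : Fin (2 * n) → ℝ) (j : Fin n) {s : ℝ}
    (hs : ∀ e : ℕ, ∀ he : e + 1 < 2 * n,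
      s ∉ Set.Ico (T ⟨e, Nat.lt_of_succ_lt he⟩) (T ⟨e + 1, he⟩)) :
    newp σ T j s = 0 := by
  rw [newp]
  refine Finset.sum_eq_zero fun e _ => ?_
  rcases Nat.lt_or_ge ((e : ℕ) + 1) (2 * n) with h' | h'
  · rw [dif_pos h']
    exact Set.indicator_of_notMem (hs e h') _
  · rw [dif_neg (not_lt.2 h')]

lemma newp_integrable {n : ℕ} (σ : Schedule n) (T : Fin (2 * n) → ℝ) (j : Fin n) :
    Integrable (newp σ T j) := by
  apply integrable_finset_sum
  intro e _
  rcases Nat.lt_or_ge ((e : ℕ) + 1) (2 * n) with h' | h'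
  · simp only [dif_pos h']
    exact (integrable_indicator_iff measurableSet_Ico).2
      (integrableOn_const measure_Ico_lt_top.ne)
  · simp only [dif_neg (not_lt.2 h')]
    exact integrable_zero _ _ _

end Aux
section Core

variable {n : ℕ} {I : GCECSPInstance n} {σ : Schedule n} {T : Fin (2 * n) → ℝ}

/-- Each inter-event interval is either free of job `j` or entirely inside its window. -/
lemma interval_cases (hF : Feasible I σ) (hT : IsEventEnum σ T) (j : Fin n)
    {e : ℕ} (he : e + 1 < 2 * n) :
    (∀ x ∈ Set.Ico (T ⟨e, Nat.lt_of_succ_lt he⟩) (T ⟨e + 1, he⟩), σ.p j x = 0) ∨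
    Set.Ico (T ⟨e, Nat.lt_of_succ_lt he⟩) (T ⟨e + 1, he⟩) ⊆ Set.Ico (σ.S j) (σ.C j) := by
  obtain ⟨m, hm⟩ := mem_enum_S hT j
  obtain ⟨k, hk⟩ := mem_enum_C hT j
  by_cases h1 : T ⟨e + 1, he⟩ ≤ σ.S j
  · exact Or.inl fun x hx => hF.2.2.2.1 j x (lt_of_lt_of_le hx.2 h1)
  by_cases h2 : σ.C j ≤ T ⟨e, Nat.lt_of_succ_lt he⟩
  · exact Or.inl fun x hx => hF.2.2.2.2.1 j x (le_trans h2 hx.1)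
  · push_neg at h1 h2
    refine Or.inr fun x hx => ⟨?_, ?_⟩
    · have hm' : m ≤ (⟨e, Nat.lt_of_succ_lt he⟩ : Fin (2 * n)) := by
        by_contra hc
        push_neg at hc
        have : (⟨e + 1, he⟩ : Fin (2 * n)) ≤ m := by
          rw [Fin.le_def]
          exact hc
        have := hT.1 this
        rw [hm] at this
        exact absurd this (not_le.2 h1)
      have := hT.1 hm'
      rw [hm] at this
      exact le_trans this hx.1
    · have hk' : (⟨e + 1, he⟩ : Fin (2 * n)) ≤ k := by
        by_contra hc
        push_neg at hc
        have : k ≤ (⟨e, Nat.lt_of_succ_lt he⟩ : Fin (2 * n)) := by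
          rw [Fin.le_def]
          exact Nat.lt_succ_iff.1 hc
        have := hT.1 this
        rw [hk] at this
        exact absurd this (not_le.2 h2)
      have := hT.1 hk'
      rw [hk] at this
      exact lt_of_lt_of_le hx.2 this

/-- Telescoping the integrals over the consecutive intervals. -/
lemma sum_integral_chain (hmono : Monotone T) (f : ℝ → ℝ) (hf : Integrable f) (hn : 0 < 2 * n) :
    ∀ k : ℕ, ∀ hk : k < 2 * n,
      (∑ e ∈ Finset.range k, if h : e + 1 < 2 * n then
          ∫ x in Set.Ico (T ⟨e, Nat.lt_of_succ_lt h⟩) (T ⟨e + 1, h⟩), f x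
        else 0)
        = ∫ x in Set.Ico (T ⟨0, hn⟩) (T ⟨k, hk⟩), f x := by
  intro k
  induction k with
  | zero => intro hk; simp
  | succ k ih =>
    intro hk
    have hk' : k < 2 * n := Nat.lt_of_succ_lt hk
    rw [Finset.sum_range_succ, ih hk', dif_pos hk]
    rw [← setIntegral_union (Set.Ico_disjoint_Ico_same) measurableSet_Ico
      hf.integrableOn hf.integrableOn,
      Set.Ico_union_Ico_eq_Ico (hmono (by simp [Fin.le_def])) (hmono (by simp [Fin.le_def]))]

/-- The averaged profile has the same total integral. -/
lemma newp_integral (hF : Feasible I σ) (hT : IsEventEnum σ T) (j : Fin n) :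
    (∫ s, newp σ T j s) = I.E j := by
  have hn : 0 < n := j.pos
  have h2n : 0 < 2 * n := by omega
  have hmono := hT.1
  have hstep : ∀ e : Fin (2 * n),
      (∫ s, if h : (e : ℕ) + 1 < 2 * n then
          (Set.Ico (T e) (T ⟨(e : ℕ) + 1, h⟩)).indicator
            (fun _ => avgOn (T e) (T ⟨(e : ℕ) + 1, h⟩) (σ.p j)) s
        else 0)
        = if h : (e : ℕ) + 1 < 2 * n then
            ∫ x in Set.Ico (T ⟨(e : ℕ), Nat.lt_of_succ_lt h⟩) (T ⟨(e : ℕ) + 1, h⟩), σ.p j x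
          else 0 := by
    intro e
    rcases Nat.lt_or_ge ((e : ℕ) + 1) (2 * n) with h' | h'
    · simp only [dif_pos h']
      rw [integral_indicator_const _ measurableSet_Ico]
      have hee : T e = T ⟨(e : ℕ), Nat.lt_of_succ_lt h'⟩ := by congr 1
      have hab : T e ≤ T ⟨(e : ℕ) + 1, h'⟩ := hmono (by simp [Fin.le_def])
      rcases eq_or_lt_of_le hab with heq | hlt
      · rw [← hee, ← heq]
        simp [avgOn]
      · rw [Real.volume_real_Ico_of_le (by linarith), smul_eq_mul, avgOn,
          mul_div_cancel₀ _ (by linarith : T ⟨(e : ℕ) + 1, h'⟩ - T e ≠ 0)]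
    · simp only [dif_neg (not_lt.2 h')]
      simp
  have hbig : (∫ s, newp σ T j s)
      = ∑ e ∈ Finset.range (2 * n), if h : e + 1 < 2 * n then
          ∫ x in Set.Ico (T ⟨e, Nat.lt_of_succ_lt h⟩) (T ⟨e + 1, h⟩), σ.p j x
        else 0 := by
    rw [show (fun s => newp σ T j s) = newp σ T j from rfl]
    unfold newp
    rw [integral_finset_sum]
    · rw [← Fin.sum_univ_eq_sum_range (fun e => if h : e + 1 < 2 * n then
          ∫ x in Set.Ico (T ⟨e, Nat.lt_of_succ_lt h⟩) (T ⟨e + 1, h⟩), σ.p j x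
        else 0) (2 * n)]
      exact Finset.sum_congr rfl fun e _ => hstep e
    · intro e _
      rcases Nat.lt_or_ge ((e : ℕ) + 1) (2 * n) with h' | h'
      · simp only [dif_pos h']
        exact (integrable_indicator_iff measurableSet_Ico).2
          (integrableOn_const measure_Ico_lt_top.ne)
      · simp only [dif_neg (not_lt.2 h')]
        exact integrable_zero _ _ _
  rw [hbig]
  have hsplit : (∑ e ∈ Finset.range (2 * n), if h : e + 1 < 2 * n then
          ∫ x in Set.Ico (T ⟨e, Nat.lt_of_succ_lt h⟩) (T ⟨e + 1, h⟩), σ.p j x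
        else 0)
      = (∑ e ∈ Finset.range (2 * n - 1), if h : e + 1 < 2 * n then
          ∫ x in Set.Ico (T ⟨e, Nat.lt_of_succ_lt h⟩) (T ⟨e + 1, h⟩), σ.p j x
        else 0) + (if h : (2 * n - 1) + 1 < 2 * n then
          ∫ x in Set.Ico (T ⟨2 * n - 1, Nat.lt_of_succ_lt h⟩) (T ⟨2 * n - 1 + 1, h⟩), σ.p j x
        else 0) := by
    have h21 : 2 * n - 1 + 1 = 2 * n := by omega
    rw [← Finset.sum_range_succ, h21]
  rw [hsplit, dif_neg (by omega), add_zero,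
    sum_integral_chain hmono (σ.p j) (σ.integrable j) h2n _ (by omega : 2 * n - 1 < 2 * n)]
  have hout : ∀ x, x ∉ Set.Ico (T ⟨0, h2n⟩) (T ⟨2 * n - 1, by omega⟩) → σ.p j x = 0 := by
    intro x hx
    rw [Set.mem_Ico, not_and_or, not_le, not_lt] at hx
    obtain ⟨m, hm⟩ := mem_enum_S hT j
    obtain ⟨k, hk⟩ := mem_enum_C hT j
    rcases hx with hx | hx
    · have : T ⟨0, h2n⟩ ≤ σ.S j := by
        rw [← hm]
        exact hmono (by simp [Fin.le_def])
      exact hF.2.2.2.1 j x (lt_of_lt_of_le hx this)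
    · have : σ.C j ≤ T ⟨2 * n - 1, by omega⟩ := by
        rw [← hk]
        exact hmono (by rw [Fin.le_def]; exact Nat.le_pred_of_lt k.2)
      exact hF.2.2.2.2.1 j x (le_trans this hx)
  rw [setIntegral_eq_integral_of_forall_compl_eq_zero hout]
  exact hF.1 j

end Core
section Final

variable {n : ℕ} {I : GCECSPInstance n} {σ : Schedule n} {T : Fin (2 * n) → ℝ}

lemma newp_before (hF : Feasible I σ) (hT : IsEventEnum σ T) (j : Fin n) {s : ℝ}
    (hs : s < σ.S j) : newp σ T j s = 0 := by
  by_cases hex : ∃ e : ℕ, ∃ he : e + 1 < 2 * n,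
      T ⟨e, Nat.lt_of_succ_lt he⟩ ≤ s ∧ s < T ⟨e + 1, he⟩
  · obtain ⟨e, he, h1, h2⟩ := hex
    rw [newp_eq σ hT.1 j he h1 h2]
    rcases interval_cases hF hT j he with hz | hsub
    · exact avgOn_eq_zero hz
    · exact absurd (hsub ⟨h1, h2⟩).1 (not_le.2 hs)
  · push_neg at hex
    exact newp_eq_zero σ T j fun e he hmem => absurd hmem.2 (not_lt.2 (hex e he hmem.1))

lemma newp_after (hF : Feasible I σ) (hT : IsEventEnum σ T) (j : Fin n) {s : ℝ}
    (hs : σ.C j ≤ s) : newp σ T j s = 0 := by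
  by_cases hex : ∃ e : ℕ, ∃ he : e + 1 < 2 * n,
      T ⟨e, Nat.lt_of_succ_lt he⟩ ≤ s ∧ s < T ⟨e + 1, he⟩
  · obtain ⟨e, he, h1, h2⟩ := hex
    rw [newp_eq σ hT.1 j he h1 h2]
    rcases interval_cases hF hT j he with hz | hsub
    · exact avgOn_eq_zero hz
    · exact absurd (hsub ⟨h1, h2⟩).2 (not_lt.2 hs)
  · push_neg at hex
    exact newp_eq_zero σ T j fun e he hmem => absurd hmem.2 (not_lt.2 (hex e he hmem.1))

lemma newp_bounds (hF : Feasible I σ) (hT : IsEventEnum σ T) (j : Fin n) {s : ℝ}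
    (hs1 : σ.S j ≤ s) (hs2 : s < σ.C j) :
    I.Pmin j ≤ newp σ T j s ∧ newp σ T j s ≤ I.Pmax j := by
  obtain ⟨m, hm⟩ := mem_enum_S hT j
  obtain ⟨k, hk⟩ := mem_enum_C hT j
  obtain ⟨e, he, h1, h2⟩ := locate hT.1 (a := m) (b := k) (hm ▸ hs1) (hk ▸ hs2)
  rw [newp_eq σ hT.1 j he h1 h2]
  have hsub : Set.Ico (T ⟨e, Nat.lt_of_succ_lt he⟩) (T ⟨e + 1, he⟩)
      ⊆ Set.Ico (σ.S j) (σ.C j) := by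
    rcases interval_cases hF hT j he with hz | hsub
    · have := hF.2.2.2.2.2.1 j s hs1 hs2
      have hzero := hz s ⟨h1, h2⟩
      have := I.Pmin_pos j
      linarith [this, hzero ▸ (hF.2.2.2.2.2.1 j s hs1 hs2).1]
    · exact hsub
  have hab : T ⟨e, Nat.lt_of_succ_lt he⟩ < T ⟨e + 1, he⟩ := lt_of_le_of_lt h1 h2
  have hint : IntegrableOn (σ.p j) (Set.Ico (T ⟨e, Nat.lt_of_succ_lt he⟩) (T ⟨e + 1, he⟩)) :=
    (σ.integrable j).integrableOn
  constructor
  · exact le_avgOn hab hint fun x hx => (hF.2.2.2.2.2.1 j x (hsub hx).1 (hsub hx).2).1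
  · exact avgOn_le hab hint fun x hx => (hF.2.2.2.2.2.1 j x (hsub hx).1 (hsub hx).2).2

lemma newp_sum_le (hF : Feasible I σ) (hT : IsEventEnum σ T) (s : ℝ) :
    (∑ j, newp σ T j s) ≤ I.P := by
  by_cases hex : ∃ e : ℕ, ∃ he : e + 1 < 2 * n,
      T ⟨e, Nat.lt_of_succ_lt he⟩ ≤ s ∧ s < T ⟨e + 1, he⟩
  · obtain ⟨e, he, h1, h2⟩ := hex
    set a := T ⟨e, Nat.lt_of_succ_lt he⟩
    set b := T ⟨e + 1, he⟩
    have hab : a < b := lt_of_le_of_lt h1 h2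
    have hsum : (∑ j, newp σ T j s) = avgOn a b (fun x => ∑ j, σ.p j x) := by
      rw [Finset.sum_congr rfl fun j _ => newp_eq σ hT.1 j he h1 h2]
      simp only [avgOn]
      rw [← Finset.sum_div]
      congr 1
      rw [integral_finset_sum _ fun j _ => (σ.integrable j).integrableOn]
    rw [hsum]
    refine avgOn_le hab ?_ fun x _ => hF.2.2.2.2.2.2 x
    exact (integrable_finset_sum _ fun j _ => σ.integrable j).integrableOn
  · push_neg at hex
    have hz : ∀ j, newp σ T j s = 0 := fun j =>
      newp_eq_zero σ T j fun e he hmem => absurd hmem.2 (not_lt.2 (hex e he hmem.1))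
    rw [Finset.sum_congr rfl fun j _ => hz j, Finset.sum_const, smul_zero]
    exact le_of_lt I.P_pos

/-- The piecewise-constant replacement schedule. -/
noncomputable def pwcSchedule (σ : Schedule n) (T : Fin (2 * n) → ℝ) : Schedule n where
  S := σ.S
  C := σ.C
  p := newp σ T
  S_lt_C := σ.S_lt_C
  integrable := fun j => newp_integrable σ T j

lemma pwcSchedule_feasible (hF : Feasible I σ) (hT : IsEventEnum σ T) :
    Feasible I (pwcSchedule σ T) :=
  ⟨fun j => newp_integral hF hT j, hF.2.1, hF.2.2.1,
    fun j t ht => newp_before hF hT j ht,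
    fun j t ht => newp_after hF hT j ht,
    fun j t ht1 ht2 => newp_bounds hF hT j ht1 ht2,
    fun t => newp_sum_le hF hT t⟩

lemma pwcSchedule_enum (hT : IsEventEnum σ T) : IsEventEnum (pwcSchedule σ T) T := by
  refine ⟨hT.1, ?_⟩
  rw [hT.2]
  rfl

lemma pwcSchedule_pwc (hT : IsEventEnum σ T) :
    PiecewiseConstantProfiles (pwcSchedule σ T) := by
  intro t' ht' j e he s₁ hs₁ s₂ hs₂
  have hTT : t' = T := by
    apply monotone_enum_unique ht'.1 hT.1
    rw [ht'.2, (pwcSchedule_enum hT).2]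
  rw [hTT] at hs₁ hs₂
  show newp σ T j s₁ = newp σ T j s₂
  rw [newp_eq σ hT.1 j he hs₁.1 hs₁.2, newp_eq σ hT.1 j he hs₂.1 hs₂.2]

end Final

/-- For any objective `g` that is a function of the start and completion
times only, the infimum of `g` over all feasible schedules equals the infimum of `g` over
all piecewise-constant feasible schedules: restricting to profiles that are constant
between consecutive events loses no optimality. -/
theorem inf_objective_piecewise_constant
    {n : ℕ} (I : GCECSPInstance n) (g : (Fin n → ℝ) → (Fin n → ℝ) → ℝ) :
    sInf {v : ℝ | ∃ σ : Schedule n, Feasible I σ ∧ v = g σ.S σ.C} =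
      sInf {v : ℝ | ∃ σ : Schedule n,
        Feasible I σ ∧ PiecewiseConstantProfiles σ ∧ v = g σ.S σ.C} := by
  congr 1
  ext v
  simp only [Set.mem_setOf_eq]
  constructor
  · rintro ⟨σ, hF, rfl⟩
    obtain ⟨T, hT⟩ := exists_eventEnum σ
    exact ⟨pwcSchedule σ T, pwcSchedule_feasible hF hT, pwcSchedule_pwc hT, rfl⟩
  · rintro ⟨σ, hF, _, rfl⟩
    exact ⟨σ, hF, rfl⟩
end
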